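/- arXiv:1602.07342 — 5 statements merged into one kernel-verified Lean document; each statement's English description precedes it below -/
import Mathlib

section
/- Let E : [0,∞) → [0,∞) be nondecreasing and continuous with E(0) = 0, and let dE denote its Lebesgue–Stieltjes measure (the Borel measure with dE((a,b]) = E(b) − E(a)). Let T > 0, let x : [0,T] → [0,∞) be Borel measurable and bounded, let K : [0,T] → [0,∞) be Borel measurable and dE-integrable on (0,T], and let u₀ ≥ 0. If x(t) ≤ u₀ + ∫_{(0,t]} K(s)·x(s) dE(s) for every t ∈ [0,T], then x(t) ≤ u₀·exp(∫_{(0,t]} K(s) dE(s)) for every t ∈ [0,T]. -/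
open MeasureTheory Set ENNReal Topology
open scoped Nat

/-!
Put `ν := K dE` on `(0, T]` and `G t := ν (0, t]`, so that the hypothesis reads
`x t ≤ u₀ + ∫_{(0,t]} x dν`. As `E` is continuous, `ν` has no atoms, and then
`∫_{(0,t]} G ^ n dν ≤ G t ^ (n + 1) / (n + 1)`, as for Lebesgue measure; this follows by induction
on `n` from `G s = G b + ν (b, s]` and Fubini. Iterating the hypothesis `n` times therefore gives
`x t ≤ u₀ ∑_{k < n} G t ^ k / k! + M G t ^ n / n!` for a bound `M ≥ 0` of `x`, and `n → ∞` yields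
`x t ≤ u₀ exp (G t)`.
-/

theorem StieltjesFunction.nullSingletonClass_measure {f : StieltjesFunction ℝ}
    (hf : Continuous f) : NullSingletonClass f.measure where
  measure_singleton a := by
    rw [f.measure_singleton, hf.continuousWithinAt.leftLim_eq, sub_self, ofReal_zero]

namespace MeasureTheory

variable {ν : Measure ℝ}

theorem lintegral_mul_measure_Ioc_eq_lintegral_lintegral [SFinite ν] [NullSingletonClass ν]
    {f : ℝ → ℝ≥0∞} (hf : Measurable f) (b u : ℝ) :
    ∫⁻ s in Ioc b u, f s * ν (Ioc b s) ∂ν = ∫⁻ w in Ioc b u, ∫⁻ s in Ioc w u, f s ∂ν ∂ν := by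
  have hmeas : Measurable (Function.uncurry fun s w : ℝ => (Iic s).indicator (fun _ => f s) w) :=
    (hf.comp measurable_fst).ite (measurableSet_le measurable_snd measurable_fst) measurable_const
  calc ∫⁻ s in Ioc b u, f s * ν (Ioc b s) ∂ν
      = ∫⁻ s in Ioc b u, ∫⁻ w in Ioc b u, (Iic s).indicator (fun _ => f s) w ∂ν ∂ν := by
        refine setLIntegral_congr_fun measurableSet_Ioc fun s hs => ?_
        rw [lintegral_indicator measurableSet_Iic, setLIntegral_const,
          Measure.restrict_apply measurableSet_Iic, Iic_inter_Ioc_of_le hs.2]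
    _ = ∫⁻ w in Ioc b u, ∫⁻ s in Ioc b u, (Iic s).indicator (fun _ => f s) w ∂ν ∂ν :=
        lintegral_lintegral_swap hmeas.aemeasurable
    _ = ∫⁻ w in Ioc b u, ∫⁻ s in Icc w u, f s ∂ν ∂ν := by
        refine setLIntegral_congr_fun measurableSet_Ioc fun w hw => ?_
        rw [← lintegral_indicator measurableSet_Icc, ← lintegral_indicator measurableSet_Ioc]
        refine lintegral_congr fun s => ?_
        by_cases hws : w ≤ s <;> by_cases hsu : s ≤ u <;>
          simp [indicator_apply, hws, hsu, hw.1.trans_le]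
    _ = ∫⁻ w in Ioc b u, ∫⁻ s in Ioc w u, f s ∂ν ∂ν := by
        simp_rw [setLIntegral_congr Ioc_ae_eq_Icc]

theorem measure_Ioc_add_measure_Ioc {a b c : ℝ} (hab : a ≤ b) (hbc : b ≤ c) :
    ν (Ioc a b) + ν (Ioc b c) = ν (Ioc a c) := by
  rw [← measure_union (Ioc_disjoint_Ioc_of_le le_rfl) measurableSet_Ioc,
    Ioc_union_Ioc_eq_Ioc hab hbc]

theorem lintegral_measure_Ioc_pow_le [SFinite ν] [NullSingletonClass ν] (n : ℕ) {a b u : ℝ}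
    (hab : a ≤ b) (hbu : b ≤ u) :
    (n + 1) * ∫⁻ s in Ioc b u, ν (Ioc a s) ^ n ∂ν + ν (Ioc a b) ^ (n + 1)
      ≤ ν (Ioc a u) ^ (n + 1) := by
  set F : ℝ → ℝ≥0∞ := fun s => ν (Ioc a s)
  have hF : Measurable F :=
    Monotone.measurable fun s t hst => measure_mono (Ioc_subset_Ioc_right hst)
  induction n generalizing b u with
  | zero => simp [← measure_Ioc_add_measure_Ioc (ν := ν) hab hbu, add_comm]
  | succ n ih =>
    set A := ∫⁻ s in Ioc b u, F s ^ (n + 1) ∂ν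
    set C := ∫⁻ s in Ioc b u, F s ^ n ∂ν
    set B := ∫⁻ s in Ioc b u, F s ^ n * ν (Ioc b s) ∂ν
    have hA : A = F b * C + B := by
      rw [← lintegral_const_mul _ (hF.pow_const n),
        ← lintegral_add_left ((hF.pow_const n).const_mul _)]
      refine setLIntegral_congr_fun measurableSet_Ioc fun s hs => ?_
      have hFs : F s = F b + ν (Ioc b s) := (measure_Ioc_add_measure_Ioc hab hs.1.le).symm
      rw [pow_succ]
      nth_rw 2 [hFs]
      ring
    -- Fubini turns `B` into `∫_{w ∈ (b,u]} ∫_{(w,u]} F ^ n dν dν`, to which the induction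
    -- hypothesis applies.
    have hB : (n + 1) * B + A ≤ ν (Ioc b u) * F u ^ (n + 1) :=
      calc (n + 1) * B + A
          = ∫⁻ w in Ioc b u, ((n + 1) * ∫⁻ s in Ioc w u, F s ^ n ∂ν + F w ^ (n + 1)) ∂ν := by
            rw [lintegral_add_right _ (hF.pow_const _), lintegral_const_mul' _ _ (by simp),
              ← lintegral_mul_measure_Ioc_eq_lintegral_lintegral (hF.pow_const n)]
        _ ≤ ∫⁻ _ in Ioc b u, F u ^ (n + 1) ∂ν :=
            setLIntegral_mono' measurableSet_Ioc fun w hw => ih (hab.trans hw.1.le) hw.2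
        _ = ν (Ioc b u) * F u ^ (n + 1) := by rw [setLIntegral_const, mul_comm]
    calc ((n + 1 : ℕ) + 1) * A + F b ^ (n + 1 + 1)
        = F b * ((n + 1) * C + F b ^ (n + 1)) + ((n + 1) * B + A) := by
          rw [hA]; push_cast; ring
      _ ≤ F b * F u ^ (n + 1) + ν (Ioc b u) * F u ^ (n + 1) :=
          add_le_add (mul_le_mul_right (ih hab hbu) _) hB
      _ = F u ^ (n + 1 + 1) := by
          rw [← add_mul, measure_Ioc_add_measure_Ioc hab hbu]; ring

section Finite

variable [IsFiniteMeasure ν]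

theorem measurable_measureReal_Ioc (a : ℝ) : Measurable fun s => ν.real (Ioc a s) :=
  Monotone.measurable fun _ _ hst => measureReal_mono (Ioc_subset_Ioc_right hst)

theorem integrable_measureReal_Ioc_pow (a : ℝ) (n : ℕ) :
    Integrable (fun s => ν.real (Ioc a s) ^ n) ν := by
  refine Integrable.of_bound ((measurable_measureReal_Ioc a).pow_const n).aestronglyMeasurable
    (ν.real univ ^ n) (ae_of_all _ fun s => ?_)
  rw [Real.norm_of_nonneg (by positivity)]
  exact pow_le_pow_left₀ measureReal_nonneg (measureReal_mono (subset_univ _)) n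

theorem setIntegral_measureReal_Ioc_pow_le [NullSingletonClass ν] (n : ℕ) {a t : ℝ}
    (hat : a ≤ t) :
    ∫ s in Ioc a t, ν.real (Ioc a s) ^ n ∂ν ≤ ν.real (Ioc a t) ^ (n + 1) / (n + 1) := by
  have key := lintegral_measure_Ioc_pow_le (ν := ν) n le_rfl hat
  rw [Ioc_self, measure_empty, zero_pow n.succ_ne_zero, add_zero] at key
  rw [integral_eq_lintegral_of_nonneg_ae (ae_of_all _ fun s => by positivity)
      ((measurable_measureReal_Ioc a).pow_const n).aestronglyMeasurable,
    le_div_iff₀ (by positivity), mul_comm]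
  have hlint : ∫⁻ s in Ioc a t, ENNReal.ofReal (ν.real (Ioc a s) ^ n) ∂ν
      = ∫⁻ s in Ioc a t, ν (Ioc a s) ^ n ∂ν := by
    refine lintegral_congr fun s => ?_
    rw [ENNReal.ofReal_pow measureReal_nonneg, ofReal_measureReal]
  have hcast : ((n : ℝ≥0∞) + 1).toReal = n + 1 := by norm_cast
  rw [hlint, measureReal_def, ← ENNReal.toReal_pow, ← hcast, ← ENNReal.toReal_mul]
  exact ENNReal.toReal_mono (by finiteness) key

theorem setIntegral_measureReal_Ioc_pow_div_factorial_le [NullSingletonClass ν] (n : ℕ)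
    {a t : ℝ} (hat : a ≤ t) :
    ∫ s in Ioc a t, ν.real (Ioc a s) ^ n / n ! ∂ν ≤ ν.real (Ioc a t) ^ (n + 1) / (n + 1) ! := by
  calc ∫ s in Ioc a t, ν.real (Ioc a s) ^ n / n ! ∂ν
      = (∫ s in Ioc a t, ν.real (Ioc a s) ^ n ∂ν) / n ! := integral_div _ _
    _ ≤ ν.real (Ioc a t) ^ (n + 1) / (n + 1) / n ! := by
      gcongr; exact setIntegral_measureReal_Ioc_pow_le n hat
    _ = ν.real (Ioc a t) ^ (n + 1) / (n + 1) ! := by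
      rw [Nat.factorial_succ, Nat.cast_mul, Nat.cast_add_one, div_div]

variable [NullSingletonClass ν] {a b u₀ M : ℝ} {x : ℝ → ℝ}

theorem le_sum_pow_div_factorial_of_le_add_setIntegral (hu₀ : 0 ≤ u₀) (hM₀ : 0 ≤ M)
    (hM : ∀ t ∈ Icc a b, x t ≤ M) (hx : ∀ t ∈ Icc a b, x t ≤ u₀ + ∫ s in Ioc a t, x s ∂ν)
    (n : ℕ) {t : ℝ} (ht : t ∈ Icc a b) :
    x t ≤ u₀ * ∑ k ∈ Finset.range n, ν.real (Ioc a t) ^ k / k !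
      + M * (ν.real (Ioc a t) ^ n / n !) := by
  induction n generalizing t with
  | zero => simpa using hM t ht
  | succ n ih =>
    set G : ℝ → ℝ := fun s => ν.real (Ioc a s)
    set P : ℝ → ℝ := fun s => u₀ * ∑ k ∈ Finset.range n, G s ^ k / k ! + M * (G s ^ n / n !)
    have hpow (k : ℕ) : Integrable (fun s => G s ^ k / k !) ν :=
      (integrable_measureReal_Ioc_pow a k).div_const _
    have hsum : Integrable (fun s => u₀ * ∑ k ∈ Finset.range n, G s ^ k / k !) ν :=
      (integrable_finsetSum _ fun k _ => hpow k).const_mul u₀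
    have hPint : Integrable P ν := hsum.add ((hpow n).const_mul M)
    have hxP : ∫ s in Ioc a t, x s ∂ν ≤ ∫ s in Ioc a t, P s ∂ν := by
      by_cases hxint : IntegrableOn x (Ioc a t) ν
      · exact setIntegral_mono_on hxint hPint.integrableOn measurableSet_Ioc
          fun s hs => ih ⟨hs.1.le, hs.2.trans ht.2⟩
      · -- the integral of a non-integrable function is `0`
        rw [integral_undef hxint]
        exact setIntegral_nonneg measurableSet_Ioc fun s _ => by positivity
    have hPle : ∫ s in Ioc a t, P s ∂ν ≤ u₀ * ∑ k ∈ Finset.range n, G t ^ (k + 1) / (k + 1) !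
        + M * (G t ^ (n + 1) / (n + 1) !) := by
      rw [integral_add hsum.integrableOn ((hpow n).const_mul M).integrableOn, integral_const_mul,
        integral_const_mul, integral_finsetSum _ fun k _ => (hpow k).integrableOn]
      gcongr with k
      all_goals exact setIntegral_measureReal_Ioc_pow_div_factorial_le _ ht.1
    calc x t ≤ u₀ + ∫ s in Ioc a t, x s ∂ν := hx t ht
      _ ≤ u₀ + (u₀ * ∑ k ∈ Finset.range n, G t ^ (k + 1) / (k + 1) !
          + M * (G t ^ (n + 1) / (n + 1) !)) := by
        gcongr; exact hxP.trans hPle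
      _ = u₀ * ∑ k ∈ Finset.range (n + 1), G t ^ k / k ! + M * (G t ^ (n + 1) / (n + 1) !) := by
        rw [Finset.sum_range_succ']
        simp only [pow_zero, Nat.factorial_zero, Nat.cast_one, div_one]
        ring

theorem le_mul_exp_of_le_add_setIntegral (hu₀ : 0 ≤ u₀) (hM : ∃ M, ∀ t ∈ Icc a b, x t ≤ M)
    (hx : ∀ t ∈ Icc a b, x t ≤ u₀ + ∫ s in Ioc a t, x s ∂ν) {t : ℝ} (ht : t ∈ Icc a b) :
    x t ≤ u₀ * Real.exp (ν.real (Ioc a t)) := by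
  obtain ⟨M, hM⟩ := hM
  set G := ν.real (Ioc a t)
  have hbound (n : ℕ) : x t ≤ u₀ * Real.exp G + max M 0 * (G ^ n / n !) := by
    refine (le_sum_pow_div_factorial_of_le_add_setIntegral hu₀ (le_max_right M 0)
      (fun s hs => (hM s hs).trans (le_max_left M 0)) hx n ht).trans ?_
    gcongr
    exact Real.sum_le_exp_of_nonneg measureReal_nonneg n
  have hlim : Filter.Tendsto (fun n : ℕ => u₀ * Real.exp G + max M 0 * (G ^ n / n !))
      Filter.atTop (𝓝 (u₀ * Real.exp G)) := by
    simpa using ((FloorSemiring.tendsto_pow_div_factorial_atTop G).const_mul (max M 0)).const_add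
      (u₀ * Real.exp G)
  exact ge_of_tendsto' hlim hbound

end Finite

end MeasureTheory

theorem timeChanged_gronwall_general
    (E : StieltjesFunction ℝ) (hEcont : Continuous E)
    (T : ℝ)
    (x K : ℝ → ℝ)
    (hxbdd : ∃ M : ℝ, ∀ t ∈ Set.Icc (0 : ℝ) T, x t ≤ M)
    (hKnonneg : ∀ t ∈ Set.Icc (0 : ℝ) T, 0 ≤ K t)
    (hKint : IntegrableOn K (Set.Ioc 0 T) E.measure)
    (u₀ : ℝ) (hu₀ : 0 ≤ u₀)
    (hineq : ∀ t ∈ Set.Icc (0 : ℝ) T,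
      x t ≤ u₀ + ∫ s in Set.Ioc 0 t, K s * x s ∂E.measure) :
    ∀ t ∈ Set.Icc (0 : ℝ) T,
      x t ≤ u₀ * Real.exp (∫ s in Set.Ioc 0 t, K s ∂E.measure) := by
  have := E.nullSingletonClass_measure hEcont
  set ν := (E.measure.restrict (Ioc 0 T)).withDensity fun s => ENNReal.ofReal (K s)
  have : IsFiniteMeasure ν := isFiniteMeasure_withDensity_ofReal hKint.2
  have hν (t : ℝ) (ht : t ∈ Icc 0 T) (g : ℝ → ℝ) :
      ∫ s in Ioc 0 t, g s ∂ν = ∫ s in Ioc 0 t, K s * g s ∂E.measure := by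
    rw [setIntegral_withDensity_eq_setIntegral_toReal_smul₀' _
        (hKint.aemeasurable.restrict.ennreal_ofReal) (ae_of_all _ fun _ => ofReal_lt_top),
      Measure.restrict_restrict measurableSet_Ioc, inter_eq_left.2 (Ioc_subset_Ioc_right ht.2)]
    refine setIntegral_congr_fun measurableSet_Ioc fun s hs => ?_
    rw [ENNReal.toReal_ofReal (hKnonneg s ⟨hs.1.le, hs.2.trans ht.2⟩), smul_eq_mul]
  intro t ht
  have hνt : ν.real (Ioc 0 t) = ∫ s in Ioc 0 t, K s ∂E.measure := by
    simpa using hν t ht 1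
  rw [← hνt]
  exact le_mul_exp_of_le_add_setIntegral hu₀ hxbdd
    (fun s hs => (hineq s hs).trans_eq (by rw [hν s hs])) ht

/-- **Time-changed Gronwall inequality (pathwise form).**
If `E` is a nondecreasing continuous function with `E 0 = 0` (a `StieltjesFunction`
with Lebesgue–Stieltjes measure `E.measure`), `x` is a nonnegative bounded Borel
function on `[0, T]`, `K` is a nonnegative Borel function integrable with respect to
`dE` on `(0, T]`, `u₀ ≥ 0`, and
`x t ≤ u₀ + ∫_{(0,t]} K s * x s dE` for all `t ∈ [0, T]`, then
`x t ≤ u₀ * exp (∫_{(0,t]} K s dE)` for all `t ∈ [0, T]`. -/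
theorem timeChanged_gronwall
    (E : StieltjesFunction ℝ) (hEcont : Continuous E) (hE0 : E 0 = 0)
    (T : ℝ) (hT : 0 < T)
    (x K : ℝ → ℝ)
    (hxmeas : Measurable x)
    (hxnonneg : ∀ t ∈ Set.Icc (0 : ℝ) T, 0 ≤ x t)
    (hxbdd : ∃ M : ℝ, ∀ t ∈ Set.Icc (0 : ℝ) T, x t ≤ M)
    (hKmeas : Measurable K)
    (hKnonneg : ∀ t ∈ Set.Icc (0 : ℝ) T, 0 ≤ K t)
    (hKint : IntegrableOn K (Set.Ioc 0 T) E.measure)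
    (u₀ : ℝ) (hu₀ : 0 ≤ u₀)
    (hineq : ∀ t ∈ Set.Icc (0 : ℝ) T,
      x t ≤ u₀ + ∫ s in Set.Ioc 0 t, K s * x s ∂E.measure) :
    ∀ t ∈ Set.Icc (0 : ℝ) T,
      x t ≤ u₀ * Real.exp (∫ s in Set.Ioc 0 t, K s ∂E.measure) :=
  timeChanged_gronwall_general E hEcont T x K hxbdd hKnonneg hKint u₀ hu₀ hineq
end

section
/- Let A be an n×n real matrix all of whose eigenvalues (as a matrix over ℂ) have strictly negative real part. Then there exist constants K > 0 and λ > 0 such that ‖exp(tA)‖ ≤ K·exp(−λt) for all t ≥ 0, where exp(tA) is the matrix exponential and ‖·‖ is the operator norm. -/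
open scoped Matrix.Norms.L2Operator

/-!
Let `B` be the complexification of `A`. The exponential `exp B` is a polynomial `p(B)`, and
testing on eigenvectors shows `p(μ) = exp μ` on the spectrum of `B`; by polynomial spectral
mapping the spectrum of `exp B` lies in `exp (spectrum B)`, inside the open unit disc. Gelfand's
formula then gives `‖(exp B)^k‖ ≤ C r^k` for some `r < 1`, and writing `t = ⌊t⌋ + s` with
`s ∈ [0, 1]` turns this into exponential decay of `exp (t B)`. Finally `‖exp (t A)‖` is at most
`‖exp (t B)‖`, since a real matrix and its complexification act isometrically on real vectors.
-/

open NormedSpace Filter Asymptotics Set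
open scoped NNReal ENNReal

section BanachAlgebra

variable {A : Type*} [NormedRing A] [NormedAlgebra ℂ A] [CompleteSpace A]

theorem exists_norm_pow_le_of_spectralRadius_lt {a : A} {r : ℝ≥0} (hr : spectralRadius ℂ a < r) :
    ∃ C > 0, ∀ k : ℕ, ‖a ^ k‖ ≤ C * r ^ k := by
  have hr₀ : 0 < r := ENNReal.coe_pos.mp (pos_of_gt hr)
  have hev : ∀ᶠ k : ℕ in atTop, ‖a ^ k‖ ≤ r ^ k := by
    have hgelfand := spectrum.pow_nnnorm_pow_one_div_tendsto_nhds_spectralRadius a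
    filter_upwards [hgelfand.eventually_lt_const hr, eventually_gt_atTop 0] with k hk hk₀
    rw [one_div, ENNReal.rpow_inv_lt_iff (by positivity), ENNReal.rpow_natCast] at hk
    exact_mod_cast hk.le
  have hO : (fun k : ℕ => a ^ k) =O[atTop] fun k => (r : ℝ) ^ k :=
    IsBigO.of_bound 1 (by simpa using hev)
  obtain ⟨C, hC₀, hC⟩ := bound_of_isBigO_nat_atTop hO
  exact ⟨C, hC₀, fun k => by simpa using hC (by positivity)⟩

theorem exp_smul_eq_exp_pow_mul (a : A) (t : ℝ) (k : ℕ) :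
    exp (t • a) = exp a ^ k * exp ((t - k) • a) := by
  let : NormedAlgebra ℚ A := .restrictScalars ℚ ℂ A
  rw [← exp_nsmul, ← Nat.cast_smul_eq_nsmul ℝ, ← exp_add_of_commute
    (((Commute.refl a).smul_left _).smul_right _), ← add_smul, add_sub_cancel]

theorem norm_exp_smul_le_rpow {a : A} {C M r : ℝ} (hC : 0 ≤ C) (hM : 0 ≤ M) (hr₀ : 0 < r)
    (hr₁ : r ≤ 1) (hpow : ∀ k : ℕ, ‖exp a ^ k‖ ≤ C * r ^ k)
    (hbound : ∀ s ∈ Icc (0 : ℝ) 1, ‖exp (s • a)‖ ≤ M) {t : ℝ} (ht : 0 ≤ t) :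
    ‖exp (t • a)‖ ≤ C * M / r * r ^ t := by
  set k := ⌊t⌋₊
  have hfract : t - k ∈ Icc (0 : ℝ) 1 :=
    ⟨sub_nonneg.2 (Nat.floor_le ht), by linarith [Nat.lt_floor_add_one t]⟩
  have hrk : r ^ k ≤ r ^ t / r := by
    rw [← Real.rpow_sub_one hr₀.ne', ← Real.rpow_natCast]
    exact Real.rpow_le_rpow_of_exponent_ge hr₀ hr₁ (by linarith [Nat.lt_floor_add_one t])
  calc ‖exp (t • a)‖ = ‖exp a ^ k * exp ((t - k) • a)‖ := by rw [exp_smul_eq_exp_pow_mul a t k]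
    _ ≤ ‖exp a ^ k‖ * ‖exp ((t - k) • a)‖ := norm_mul_le _ _
    _ ≤ C * r ^ k * M := mul_le_mul (hpow k) (hbound _ hfract) (norm_nonneg _) (by positivity)
    _ ≤ C * (r ^ t / r) * M := by gcongr
    _ = C * M / r * r ^ t := by ring

theorem exists_norm_exp_smul_le_of_spectralRadius_exp_lt_one {a : A}
    (ha : spectralRadius ℂ (exp a) < 1) :
    ∃ K > (0 : ℝ), ∃ lam > (0 : ℝ), ∀ t : ℝ, 0 ≤ t → ‖exp (t • a)‖ ≤ K * Real.exp (-lam * t) := by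
  let : NormedAlgebra ℚ A := .restrictScalars ℚ ℂ A
  obtain ⟨r, hρr, hr₁⟩ := ENNReal.lt_iff_exists_nnreal_btwn.mp ha
  have hr₀ : (0 : ℝ) < r := ENNReal.coe_pos.mp (pos_of_gt hρr)
  have hr₁ : (r : ℝ) < 1 := by exact_mod_cast hr₁
  obtain ⟨C, hC₀, hC⟩ := exists_norm_pow_le_of_spectralRadius_lt hρr
  obtain ⟨M, hM₀, hM⟩ := ((isCompact_Icc (a := (0 : ℝ)) (b := 1)).image_of_continuousOn
    (f := fun s : ℝ => exp (s • a)) (by fun_prop)).isBounded.exists_pos_norm_le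
  refine ⟨C * M / r, by positivity, -Real.log r, neg_pos.2 (Real.log_neg hr₀ hr₁), fun t ht => ?_⟩
  rw [neg_neg, ← Real.rpow_def_of_pos hr₀]
  exact norm_exp_smul_le_rpow hC₀.le hM₀.le hr₀ hr₁.le hC
    (fun s hs => hM _ (mem_image_of_mem _ hs)) ht

end BanachAlgebra

theorem EuclideanSpace.norm_toLp_ofReal {n : Type*} [Fintype n] (v : n → ℝ) :
    ‖WithLp.toLp 2 (fun i => (v i : ℂ))‖ = ‖WithLp.toLp 2 v‖ := by
  simp [EuclideanSpace.norm_eq]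

namespace Matrix

theorem l2_opNorm_le_l2_opNorm_map_ofReal {m n : Type*} [Fintype m] [Fintype n] [DecidableEq n]
    (M : Matrix m n ℝ) :
    ‖M‖ ≤ ‖M.map ((↑) : ℝ → ℂ)‖ := by
  rw [l2_opNorm_def]
  refine ContinuousLinearMap.opNorm_le_bound _ (norm_nonneg _) fun x => ?_
  have h := l2_opNorm_mulVec (M.map ((↑) : ℝ → ℂ)) (WithLp.toLp 2 fun i => (x i : ℂ))
  have hMx : (M.map ((↑) : ℝ → ℂ) *ᵥ fun i => (x i : ℂ)) = fun i => ((M *ᵥ x.ofLp) i : ℂ) := by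
    ext i
    exact (Complex.ofRealHom.map_mulVec M x.ofLp i).symm
  rw [hMx, EuclideanSpace.norm_toLp_ofReal] at h
  exact (EuclideanSpace.norm_toLp_ofReal _).symm.trans_le h

variable {ι 𝕜 : Type*} [Fintype ι] [DecidableEq ι] [RCLike 𝕜]

theorem exp_map_ofReal (M : Matrix ι ι ℝ) : (exp M).map ((↑) : ℝ → ℂ) = exp (M.map (↑)) := by
  let : NormedAlgebra ℚ (Matrix ι ι ℝ) := .restrictScalars ℚ ℝ _
  exact map_exp Complex.ofRealHom.mapMatrix (continuous_id.matrix_map Complex.continuous_ofReal) M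

theorem exp_mulVec_of_hasEigenvector {M : Matrix ι ι 𝕜} {μ : 𝕜} {v : ι → 𝕜}
    (hv : Module.End.HasEigenvector (toLin' M) μ v) : exp M *ᵥ v = exp μ • v := by
  let mulVecHom : Matrix ι ι 𝕜 →+ (ι → 𝕜) :=
    AddMonoidHom.mk' (· *ᵥ v) fun _ _ => add_mulVec _ _ _
  have hM := (exp_series_hasSum_exp' (𝕂 := 𝕜) M).map mulVecHom
    (continuous_id.matrix_mulVec continuous_const)
  refine hM.unique ?_
  convert (exp_series_hasSum_exp' (𝕂 := 𝕜) μ).smul_const v using 2 with k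
  simp [mulVecHom, ← toLin'_apply, hv.pow_apply, smul_smul]

theorem exists_aeval_eq_exp (M : Matrix ι ι 𝕜) :
    ∃ p : Polynomial 𝕜, Polynomial.aeval M p = exp M := by
  have h : exp M ∈ Algebra.adjoin 𝕜 {M} := exp_mem (R := 𝕜) (s := Algebra.adjoin 𝕜 {M})
    (Subalgebra.toSubmodule (Algebra.adjoin 𝕜 {M})).closed_of_finiteDimensional
    (Algebra.self_mem_adjoin_singleton 𝕜 M)
  rwa [Algebra.adjoin_singleton_eq_range_aeval] at h

theorem spectrum_exp_subset (M : Matrix ι ι ℂ) :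
    spectrum ℂ (exp M) ⊆ Complex.exp '' spectrum ℂ M := by
  intro ν hν
  rcases isEmpty_or_nonempty ι with hι | hι
  · simp [spectrum.of_subsingleton] at hν
  obtain ⟨p, hp⟩ := exists_aeval_eq_exp M
  rw [← hp, spectrum.map_polynomial_aeval_of_nonempty M p (spectrum.nonempty M)] at hν
  obtain ⟨μ, hμ, rfl⟩ := hν
  refine ⟨μ, hμ, ?_⟩
  obtain ⟨v, hv⟩ := (Module.End.hasEigenvalue_iff_mem_spectrum.mpr
    ((spectrum_toLin' M).symm ▸ hμ)).exists_hasEigenvector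
  have hpoly : exp M *ᵥ v = p.eval μ • v := by
    rw [← hp, ← toLin'_apply]
    change toLinAlgEquiv' (Polynomial.aeval M p) v = _
    rw [← Polynomial.aeval_algHom_apply]
    exact Module.End.aeval_apply_of_hasEigenvector hv
  rw [Complex.exp_eq_exp_ℂ]
  exact smul_left_injective ℂ hv.2 ((exp_mulVec_of_hasEigenvector hv).symm.trans hpoly)

theorem spectralRadius_exp_lt_one {M : Matrix ι ι ℂ} (hM : ∀ μ ∈ spectrum ℂ M, μ.re < 0) :
    spectralRadius ℂ (exp M) < 1 := by
  rcases (spectrum ℂ (exp M)).eq_empty_or_nonempty with h | h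
  · simp [spectralRadius, h]
  refine spectrum.spectralRadius_lt_of_forall_lt_of_nonempty h fun ν hν => ?_
  obtain ⟨μ, hμ, rfl⟩ := spectrum_exp_subset M hν
  rw [← NNReal.coe_lt_coe, coe_nnnorm, Complex.norm_exp, NNReal.coe_one, Real.exp_lt_one_iff]
  exact hM μ hμ

end Matrix

/-- **Exponential decay of the matrix exponential for a Hurwitz matrix.**
If every eigenvalue of the `n × n` real matrix `A` (viewed as a complex matrix)
has strictly negative real part, then there are constants `K > 0` and `λ > 0`
with `‖exp (t • A)‖ ≤ K * exp (-λ * t)` for all `t ≥ 0`, where `‖·‖` is the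
(ℓ²-)operator norm on matrices. -/
theorem matrix_exp_decay_of_spectrum_neg
    (n : ℕ) (A : Matrix (Fin n) (Fin n) ℝ)
    (hA : ∀ μ ∈ spectrum ℂ (A.map Complex.ofReal), μ.re < 0) :
    ∃ K > (0 : ℝ), ∃ lam > (0 : ℝ), ∀ t : ℝ, 0 ≤ t →
      ‖NormedSpace.exp (t • A)‖ ≤ K * Real.exp (-lam * t) := by
  obtain ⟨K, hK, lam, hlam, hdecay⟩ := exists_norm_exp_smul_le_of_spectralRadius_exp_lt_one
    (A := Matrix (Fin n) (Fin n) ℂ) (Matrix.spectralRadius_exp_lt_one hA)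
  refine ⟨K, hK, lam, hlam, fun t ht => ?_⟩
  calc ‖NormedSpace.exp (t • A)‖ ≤ ‖(NormedSpace.exp (t • A)).map Complex.ofReal‖ :=
        Matrix.l2_opNorm_le_l2_opNorm_map_ofReal _
    _ = ‖NormedSpace.exp (t • A.map Complex.ofReal)‖ := by
        rw [Matrix.exp_map_ofReal, Matrix.map_smul _ t (Complex.ofReal_mul t)]
    _ ≤ K * Real.exp (-lam * t) := hdecay t ht
end

section
/- Let U : [0,∞) → [0,∞) be strictly increasing and right-continuous with U(0) = 0 and U(s) → ∞ as s → ∞, define its generalized inverse E(t) := inf{s > 0 : U(s) > t}, and let dE denote the Lebesgue–Stieltjes measure of E (the Borel measure with dE((a,b]) = E(b) − E(a)). Define the left limit U⁻(s) := sup{U(r) : 0 ≤ r < s} for s > 0 and U⁻(0) := 0. Then for every Borel measurable function f : [0,∞) → [0,∞) and every t ≥ 0, ∫_{(0,t]} f(s) dE(s) = ∫_{(0,E(t)]} f(U⁻(s)) ds, where the right-hand side is the Lebesgue integral. -/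
open MeasureTheory Filter

/-!
The left limit `U⁻` and the generalized inverse `E` form a Galois connection on `(0, ∞) × [0, ∞)`:
`U⁻ s ≤ x ↔ s ≤ E x`. Hence `U⁻` pulls `(a, b]` back to `(E a, E b]`, so the image of Lebesgue
measure on `(0, ∞)` under `U⁻` is the Stieltjes measure `dE`, and the formula is the change of
variables for an image measure.
-/

open Set

theorem MeasureTheory.Measure.restrict_Ioc_eq_of_forall_Ioc {μ ν : Measure ℝ} {c d : ℝ}
    (hfin : μ (Ioc c d) ≠ ⊤)
    (h : ∀ a b, c ≤ a → a ≤ b → b ≤ d → μ (Ioc a b) = ν (Ioc a b)) :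
    μ.restrict (Ioc c d) = ν.restrict (Ioc c d) := by
  refine Measure.ext_of_Ioc' _ _ (fun a b _ => ?_) (fun a b _ => ?_)
  · rw [Measure.restrict_apply measurableSet_Ioc]
    exact ne_top_of_le_ne_top hfin (measure_mono inter_subset_right)
  · rw [Measure.restrict_apply measurableSet_Ioc, Measure.restrict_apply measurableSet_Ioc,
      Ioc_inter_Ioc]
    by_cases hle : max a c ≤ min b d
    · exact h _ _ (le_max_right a c) hle (min_le_right b d)
    · simp [Ioc_eq_empty_of_le (not_le.1 hle).le]

noncomputable def leftSup (U : ℝ → ℝ) (s : ℝ) : ℝ := sSup (U '' Ico 0 s)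

noncomputable def genInv (U : ℝ → ℝ) (t : ℝ) : ℝ := sInf {s : ℝ | 0 < s ∧ t < U s}

section

variable {U : ℝ → ℝ}

theorem bddAbove_image_Ico_zero (hU : MonotoneOn U (Ici 0)) (s : ℝ) : BddAbove (U '' Ico 0 s) :=
  ⟨U (max s 0), by
    rintro _ ⟨r, ⟨hr0, hrs⟩, rfl⟩
    exact hU hr0 (le_max_right s 0) (hrs.le.trans (le_max_left s 0))⟩

theorem leftSup_monotone (hU0 : 0 ≤ U 0) (hU : MonotoneOn U (Ici 0)) : Monotone (leftSup U) := by
  intro s s' hss'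
  rcases le_or_gt s 0 with hs | hs
  · have hs' : 0 ≤ leftSup U s' := by
      rcases le_or_gt s' 0 with hs' | hs'
      · simp [leftSup, Ico_eq_empty_of_le hs']
      · exact Real.sSup_nonneg' ⟨U 0, ⟨0, ⟨le_rfl, hs'⟩, rfl⟩, hU0⟩
    simpa [leftSup, Ico_eq_empty_of_le hs] using hs'
  · exact csSup_le_csSup (bddAbove_image_Ico_zero hU s') ⟨U 0, 0, ⟨le_rfl, hs⟩, rfl⟩
      (image_mono (Ico_subset_Ico_right hss'))

theorem genInv_nonneg (t : ℝ) : 0 ≤ genInv U t :=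
  Real.sInf_nonneg fun _ hs => hs.1.le

theorem genInv_zero (hU0 : U 0 = 0) (hU : StrictMonoOn U (Ici 0)) : genInv U 0 = 0 := by
  refine le_antisymm (le_of_forall_pos_le_add fun ε hε => ?_) (genInv_nonneg 0)
  have hUε : 0 < U ε := hU0 ▸ hU self_mem_Ici hε.le hε
  rw [zero_add]
  exact csInf_le (⟨0, fun _ hs => hs.1.le⟩ : BddBelow {s : ℝ | 0 < s ∧ 0 < U s}) ⟨hε, hUε⟩

theorem leftSup_le_iff_le_genInv (hU : MonotoneOn U (Ici 0)) (htop : Tendsto U atTop atTop)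
    {s x : ℝ} (hs : 0 < s) (hx : U 0 ≤ x) : leftSup U s ≤ x ↔ s ≤ genInv U x := by
  constructor
  · intro hsx
    have hne : {u : ℝ | 0 < u ∧ x < U u}.Nonempty :=
      ((htop.eventually_gt_atTop x).and (eventually_gt_atTop 0)).exists.imp fun _ h => h.symm
    refine le_csInf hne fun u ⟨hu0, hxu⟩ => not_lt.1 fun hus => hxu.not_ge ?_
    exact (le_csSup (bddAbove_image_Ico_zero hU s) ⟨u, ⟨hu0.le, hus⟩, rfl⟩).trans hsx
  · intro hsE
    refine csSup_le ⟨U 0, 0, ⟨le_rfl, hs⟩, rfl⟩ ?_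
    rintro _ ⟨r, ⟨hr0, hrs⟩, rfl⟩
    refine not_lt.1 fun hxr => ?_
    have hr : 0 < r := hr0.lt_of_ne fun h => (h ▸ hx).not_gt hxr
    exact (hsE.trans (csInf_le ⟨0, fun _ hu => hu.1.le⟩ ⟨hr, hxr⟩)).not_gt hrs

theorem leftSup_preimage_Ioc_inter_Ioi (hU : MonotoneOn U (Ici 0)) (htop : Tendsto U atTop atTop)
    {a b : ℝ} (ha : U 0 ≤ a) (hab : a ≤ b) :
    leftSup U ⁻¹' Ioc a b ∩ Ioi 0 = Ioc (genInv U a) (genInv U b) := by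
  ext s
  simp only [mem_inter_iff, mem_Ioi, mem_preimage, mem_Ioc]
  constructor
  · rintro ⟨⟨has, hsb⟩, hs⟩
    exact ⟨lt_of_not_ge fun h => has.not_ge ((leftSup_le_iff_le_genInv hU htop hs ha).2 h),
      (leftSup_le_iff_le_genInv hU htop hs (ha.trans hab)).1 hsb⟩
  · rintro ⟨has, hsb⟩
    have hs : 0 < s := (genInv_nonneg a).trans_lt has
    exact ⟨⟨lt_of_not_ge fun h => has.not_ge ((leftSup_le_iff_le_genInv hU htop hs ha).1 h),
      (leftSup_le_iff_le_genInv hU htop hs (ha.trans hab)).2 hsb⟩, hs⟩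

theorem map_leftSup_apply_Ioc (hU0 : U 0 = 0) (hU : MonotoneOn U (Ici 0))
    (htop : Tendsto U atTop atTop) {a b : ℝ} (ha : 0 ≤ a) (hab : a ≤ b) :
    (volume.restrict (Ioi 0)).map (leftSup U) (Ioc a b) =
      ENNReal.ofReal (genInv U b - genInv U a) := by
  rw [Measure.map_apply (leftSup_monotone hU0.ge hU).measurable measurableSet_Ioc,
    Measure.restrict_apply' measurableSet_Ioi,
    leftSup_preimage_Ioc_inter_Ioi hU htop (hU0.trans_le ha) hab, Real.volume_Ioc]

end

theorem second_change_of_variable_general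
    (U : ℝ → ℝ)
    (hU0 : U 0 = 0)
    (hUmono : StrictMonoOn U (Set.Ici 0))
    (hUtop : Tendsto U atTop atTop)
    (E : ℝ → ℝ)
    (hE : ∀ t : ℝ, 0 ≤ t → E t = sInf {s : ℝ | 0 < s ∧ t < U s})
    (dE : Measure ℝ)
    (hdE : ∀ a b : ℝ, 0 ≤ a → a ≤ b →
      dE (Set.Ioc a b) = ENNReal.ofReal (E b - E a))
    (Um : ℝ → ℝ)
    (hUm : ∀ s : ℝ, 0 < s → Um s = sSup (U '' Set.Ico 0 s))
    (f : ℝ → ENNReal) (hf : Measurable f)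
    (t : ℝ) (ht : 0 ≤ t) :
    ∫⁻ s in Set.Ioc 0 t, f s ∂dE = ∫⁻ s in Set.Ioc 0 (E t), f (Um s) := by
  have hmeas : Measurable (leftSup U) := (leftSup_monotone hU0.ge hUmono.monotoneOn).measurable
  have hdE_eq : dE.restrict (Ioc 0 t) =
      ((volume.restrict (Ioi 0)).map (leftSup U)).restrict (Ioc 0 t) := by
    refine Measure.restrict_Ioc_eq_of_forall_Ioc (by simp [hdE 0 t le_rfl ht])
      fun a b ha hab _ => ?_
    rw [hdE a b ha hab, hE a ha, hE b (ha.trans hab),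
      map_leftSup_apply_Ioc hU0 hUmono.monotoneOn hUtop ha hab, genInv, genInv]
  have hpre : leftSup U ⁻¹' Ioc 0 t ∩ Ioi 0 = Ioc 0 (E t) := by
    rw [leftSup_preimage_Ioc_inter_Ioi hUmono.monotoneOn hUtop hU0.le ht, genInv_zero hU0 hUmono,
      hE t ht, genInv]
  calc ∫⁻ s in Ioc 0 t, f s ∂dE
      = ∫⁻ s, f s ∂(volume.restrict (Ioc 0 (E t))).map (leftSup U) := by
        rw [hdE_eq, Measure.restrict_map hmeas measurableSet_Ioc,
          Measure.restrict_restrict' measurableSet_Ioi, hpre]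
    _ = ∫⁻ s in Ioc 0 (E t), f (leftSup U s) := lintegral_map hf hmeas
    _ = ∫⁻ s in Ioc 0 (E t), f (Um s) :=
        setLIntegral_congr_fun measurableSet_Ioc fun s hs => by rw [hUm s hs.1, leftSup]

/-- **Second change-of-variable formula (drift part).**
Let `U : [0,∞) → [0,∞)` be strictly increasing and right-continuous with `U 0 = 0`
and `U s → ∞`, let `E t = inf {s > 0 : U s > t}` be its generalized inverse, let
`dE` be the Lebesgue–Stieltjes measure of `E` (so `dE (a, b] = E b - E a`), and let
`U⁻ s = sup {U r : 0 ≤ r < s}` (with `U⁻ 0 = 0`) be the left-limit function of `U`.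
Then for every Borel measurable `f : [0,∞) → [0,∞]` and every `t ≥ 0`,
`∫_{(0,t]} f s dE s = ∫_{(0, E t]} f (U⁻ s) ds`. -/
theorem second_change_of_variable
    (U : ℝ → ℝ)
    (hU0 : U 0 = 0)
    (hUnonneg : ∀ s : ℝ, 0 ≤ s → 0 ≤ U s)
    (hUmono : StrictMonoOn U (Set.Ici 0))
    (hUrc : ∀ s ∈ Set.Ici (0 : ℝ), ContinuousWithinAt U (Set.Ici s) s)
    (hUtop : Tendsto U atTop atTop)
    (E : ℝ → ℝ)
    (hE : ∀ t : ℝ, 0 ≤ t → E t = sInf {s : ℝ | 0 < s ∧ t < U s})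
    (dE : Measure ℝ)
    (hdE : ∀ a b : ℝ, 0 ≤ a → a ≤ b →
      dE (Set.Ioc a b) = ENNReal.ofReal (E b - E a))
    (Um : ℝ → ℝ)
    (hUm : ∀ s : ℝ, 0 < s → Um s = sSup (U '' Set.Ico 0 s))
    (hUm0 : Um 0 = 0)
    (f : ℝ → ENNReal) (hf : Measurable f)
    (t : ℝ) (ht : 0 ≤ t) :
    ∫⁻ s in Set.Ioc 0 t, f s ∂dE = ∫⁻ s in Set.Ioc 0 (E t), f (Um s) :=
  second_change_of_variable_general U hU0 hUmono hUtop E hE dE hdE Um hUm f hf t ht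
end

section
/- Let E : [0,∞) → [0,∞) be nondecreasing and continuous with E(0) = 0, with Lebesgue–Stieltjes measure dE (dE((a,b]) = E(b) − E(a)). Let A be an n×n real matrix, x₀ ∈ ℝⁿ, and F : [0,∞) → ℝⁿ a Borel function integrable with respect to dE on (0,t] for every t. If X : [0,∞) → ℝⁿ is continuous and satisfies X(t) = x₀ + ∫_{(0,t]} (A·X(s) + F(s)) dE(s) for all t ≥ 0, then X(t) = exp(E(t)·A)·x₀ + ∫_{(0,t]} exp((E(t) − E(s))·A)·F(s) dE(s) for all t ≥ 0. -/
/-!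
The formula holds for any bounded operator `A` on a Banach space, and the matrix case follows
through `M ↦ (v ↦ M *ᵥ v)`, which commutes with `exp`. Fix `t ≥ 0` and put
`P s = exp ((E t - E s) • A)`. Integrate `(A * P s) (X s - x₀)` against `dE`, write `X s - x₀` as
the `dE`-integral of `A X + F` over `(0, s]` and exchange the two integrals (Fubini on the
triangle `0 < r ≤ s ≤ t`): the inner integral becomes `∫_{[r,t]} A P s dE(s)`, which the
substitution `u = E s` (valid as `E` is continuous) turns into
`∫_{E r}^{E t} A exp ((E t - u) • A) du = P r - 1`. In the resulting identity the terms
`(A * P s) (X s)` cancel, since `A` commutes with `P s`, and what remains is the formula.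
-/

open MeasureTheory Set NormedSpace

section Bilinear

variable {M V W : Type*} [NormedAddCommGroup M] [NormedSpace ℝ M]
  [NormedAddCommGroup V] [NormedSpace ℝ V] [NormedAddCommGroup W] [NormedSpace ℝ W]
  {μ : Measure ℝ} (B : M →L[ℝ] V →L[ℝ] W) {K : ℝ → M} {G : ℝ → V} {a b : ℝ}

theorem ContinuousLinearMap.integrableOn_Ioc_bilin (hK : ContinuousOn K (Icc a b))
    (hG : IntegrableOn G (Ioc a b) μ) :
    IntegrableOn (fun x => B (K x) (G x)) (Ioc a b) μ := by
  obtain ⟨C, hC⟩ := isCompact_Icc.exists_bound_of_continuousOn hK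
  exact B.integrable_of_bilin_of_bdd_left C
    ((hK.mono Ioc_subset_Icc_self).aestronglyMeasurable measurableSet_Ioc)
    (ae_restrict_of_forall_mem measurableSet_Ioc fun x hx => hC x (Ioc_subset_Icc_self hx)) hG

theorem ContinuousLinearMap.setIntegral_Ioc_bilin_setIntegral_Ioc [CompleteSpace M]
    [CompleteSpace V] [CompleteSpace W] [SFinite μ]
    (hK : IntegrableOn K (Ioc a b) μ) (hG : IntegrableOn G (Ioc a b) μ) :
    ∫ s in Ioc a b, B (K s) (∫ r in Ioc a s, G r ∂μ) ∂μ =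
      ∫ r in Ioc a b, B (∫ s in Icc r b, K s ∂μ) (G r) ∂μ := by
  set f : ℝ × ℝ → W := {p | p.2 ≤ p.1}.indicator fun p => B (K p.1) (G p.2)
  have hf : Integrable f ((μ.restrict (Ioc a b)).prod (μ.restrict (Ioc a b))) := by
    refine Integrable.indicator ?_ (measurableSet_le measurable_snd measurable_fst)
    refine Integrable.mono' ((hK.norm.const_mul ‖B‖).mul_prod hG.norm)
      (B.aestronglyMeasurable_comp₂
        (hK.aestronglyMeasurable.comp_quasiMeasurePreserving Measure.quasiMeasurePreserving_fst)
        (hG.aestronglyMeasurable.comp_quasiMeasurePreserving Measure.quasiMeasurePreserving_snd))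
      (.of_forall fun p => ?_)
    simpa [mul_assoc] using B.le_opNorm₂ (K p.1) (G p.2)
  have hinner : ∀ s ∈ Ioc a b,
      B (K s) (∫ r in Ioc a s, G r ∂μ) = ∫ r in Ioc a b, f (s, r) ∂μ := by
    intro s hs
    have hset : Iic s ∩ Ioc a b = Ioc a s := by
      rw [inter_comm, Ioc_inter_Iic, min_eq_right hs.2]
    rw [← (B (K s)).integral_comp_comm (hG.mono_set (Ioc_subset_Ioc_right hs.2)), ← hset,
      ← Measure.restrict_restrict measurableSet_Iic, ← integral_indicator measurableSet_Iic]
    refine integral_congr_ae (.of_forall fun r => ?_)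
    by_cases h : r ≤ s <;> simp [f, h]
  have houter : ∀ r ∈ Ioc a b,
      B (∫ s in Icc r b, K s ∂μ) (G r) = ∫ s in Ioc a b, f (s, r) ∂μ := by
    intro r hr
    have hset : Ici r ∩ Ioc a b = Icc r b := by
      ext s
      simp only [mem_inter_iff, mem_Ici, mem_Ioc, mem_Icc]
      exact ⟨fun h => ⟨h.1, h.2.2⟩, fun h => ⟨h.1, hr.1.trans_le h.1, h.2⟩⟩
    change B.flip (G r) _ = _
    rw [← (B.flip (G r)).integral_comp_comm (hK.mono_set (Icc_subset_Ioc_left hr.1)), ← hset,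
      ← Measure.restrict_restrict measurableSet_Ici, ← integral_indicator measurableSet_Ici]
    refine integral_congr_ae (.of_forall fun s => ?_)
    by_cases h : r ≤ s <;> simp [f, h]
  calc ∫ s in Ioc a b, B (K s) (∫ r in Ioc a s, G r ∂μ) ∂μ
      = ∫ s in Ioc a b, ∫ r in Ioc a b, f (s, r) ∂μ ∂μ :=
        setIntegral_congr_fun measurableSet_Ioc hinner
    _ = ∫ r in Ioc a b, ∫ s in Ioc a b, f (s, r) ∂μ ∂μ := integral_integral_swap hf
    _ = ∫ r in Ioc a b, B (∫ s in Icc r b, K s ∂μ) (G r) ∂μ :=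
        (setIntegral_congr_fun measurableSet_Ioc houter).symm

end Bilinear

section Exponential

variable {𝔸 : Type*} [NormedRing 𝔸] [NormedAlgebra ℝ 𝔸] [CompleteSpace 𝔸]

theorem continuous_exp_smul_const (A : 𝔸) : Continuous fun u : ℝ => exp (u • A) :=
  (differentiable_exp_smul_const ℝ A).continuous

theorem integral_mul_exp_smul_sub (A : 𝔸) (p q : ℝ) :
    ∫ u in p..q, A * exp ((q - u) • A) = exp ((q - p) • A) - 1 := by
  have hderiv : ∀ u ∈ uIcc p q,
      HasDerivAt (fun u : ℝ => -exp ((q - u) • A)) (A * exp ((q - u) • A)) u := fun u _ => by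
    simpa using ((hasDerivAt_exp_smul_const' (𝕂 := ℝ) A (q - u)).comp_const_sub q u).fun_neg
  have hcont : Continuous fun u : ℝ => A * exp ((q - u) • A) :=
    continuous_const.mul ((continuous_exp_smul_const A).comp (by fun_prop))
  rw [intervalIntegral.integral_eq_sub_of_hasDerivAt hderiv (hcont.intervalIntegrable _ _),
    sub_self, zero_smul, exp_zero]
  abel

end Exponential

namespace StieltjesFunction

variable {E : StieltjesFunction ℝ}

lemma measure_singleton_of_continuous (hE : Continuous E) (x : ℝ) : E.measure {x} = 0 := by
  rw [measure_singleton, hE.continuousWithinAt.leftLim_eq, sub_self, ENNReal.ofReal_zero]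

lemma exists_Ioc_inter_preimage_Iic (hE : Continuous E) {a b x : ℝ} (hab : a ≤ b)
    (hax : E a ≤ x) (hxb : x ≤ E b) :
    ∃ v ∈ Icc a b, E v = x ∧ Ioc a b ∩ E ⁻¹' Iic x = Ioc a v := by
  set S := Icc a b ∩ E ⁻¹' Iic x
  have hS : IsClosed S := isClosed_Icc.inter (isClosed_Iic.preimage hE)
  have hSbdd : BddAbove S := ⟨b, fun s hs => hs.1.2⟩
  have hv : sSup S ∈ S := hS.csSup_mem ⟨a, ⟨le_rfl, hab⟩, hax⟩ hSbdd
  obtain ⟨w, hw, hEw⟩ := intermediate_value_Icc hv.1.2 hE.continuousOn ⟨hv.2, hxb⟩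
  have hwv : w = sSup S :=
    le_antisymm (le_csSup hSbdd ⟨⟨hv.1.1.trans hw.1, hw.2⟩, hEw.le⟩) hw.1
  refine ⟨sSup S, hv.1, hwv ▸ hEw, ?_⟩
  ext s
  constructor
  · rintro ⟨hs, hEs⟩
    exact ⟨hs.1, le_csSup hSbdd ⟨Ioc_subset_Icc_self hs, hEs⟩⟩
  · rintro ⟨has, hsv⟩
    exact ⟨⟨has, hsv.trans hv.1.2⟩, (E.mono hsv).trans hv.2⟩

lemma map_restrict_Ioc (hE : Continuous E) {a b : ℝ} (hab : a ≤ b) :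
    (E.measure.restrict (Ioc a b)).map E = volume.restrict (Ioc (E a) (E b)) := by
  have : IsFiniteMeasure (E.measure.restrict (Ioc a b)) :=
    isFiniteMeasure_restrict.2 (by simp [measure_Ioc])
  refine Measure.ext_of_Iic _ _ fun x => ?_
  rw [Measure.map_apply hE.measurable measurableSet_Iic,
    Measure.restrict_apply (hE.measurable measurableSet_Iic),
    Measure.restrict_apply measurableSet_Iic, inter_comm (Iic x), Ioc_inter_Iic, Real.volume_Ioc,
    inter_comm]
  rcases lt_or_ge x (E a) with hxa | hax
  · have hempty : Ioc a b ∩ E ⁻¹' Iic x = ∅ :=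
      eq_empty_of_forall_notMem fun s hs => (hxa.trans_le (E.mono hs.1.1.le)).not_ge hs.2
    rw [hempty, measure_empty, ENNReal.ofReal_eq_zero.2 (by linarith [min_le_right (E b) x])]
  rcases le_or_gt x (E b) with hxb | hbx
  · obtain ⟨v, -, hEv, hpre⟩ := exists_Ioc_inter_preimage_Iic hE hab hax hxb
    rw [hpre, measure_Ioc, hEv, min_eq_right hxb]
  · have hsub : Ioc a b ⊆ E ⁻¹' Iic x := fun s hs => (E.mono hs.2).trans hbx.le
    rw [inter_eq_left.2 hsub, measure_Ioc, min_eq_left hbx.le]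

lemma setIntegral_comp {V : Type*} [NormedAddCommGroup V] [NormedSpace ℝ V]
    (hE : Continuous E) {a b : ℝ} (hab : a ≤ b) {g : ℝ → V}
    (hg : AEStronglyMeasurable g (volume.restrict (Ioc (E a) (E b)))) :
    ∫ s in Ioc a b, g (E s) ∂E.measure = ∫ u in E a..E b, g u := by
  rw [intervalIntegral.integral_of_le (E.mono hab), ← map_restrict_Ioc hE hab,
    integral_map hE.aemeasurable (by rwa [map_restrict_Ioc hE hab])]

section Exponential

variable {𝔸 : Type*} [NormedRing 𝔸] [NormedAlgebra ℝ 𝔸] [CompleteSpace 𝔸]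

lemma integrableOn_Ioc_mul_exp_smul (hE : Continuous E) (A : 𝔸) {a b t : ℝ} :
    IntegrableOn (fun s => A * exp ((E t - E s) • A)) (Ioc a b) E.measure :=
  (continuous_const.mul ((continuous_exp_smul_const A).comp (continuous_const.sub hE)))
    |>.continuousOn.integrableOn_Icc.mono_set Ioc_subset_Icc_self

lemma setIntegral_mul_exp_smul_sub (hE : Continuous E) (A : 𝔸) {r t : ℝ} (hrt : r ≤ t) :
    ∫ s in Ioc r t, A * exp ((E t - E s) • A) ∂E.measure = exp ((E t - E r) • A) - 1 := by
  rw [setIntegral_comp (g := fun u => A * exp ((E t - u) • A)) hE hrt,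
    integral_mul_exp_smul_sub]
  exact (continuous_const.mul ((continuous_exp_smul_const A).comp
    (by fun_prop))).aestronglyMeasurable

variable {V : Type*} [NormedAddCommGroup V] [NormedSpace ℝ V] [CompleteSpace V]

lemma setIntegral_mul_exp_smul_apply (hE : Continuous E) (A : V →L[ℝ] V) (v : V) {r t : ℝ}
    (hrt : r ≤ t) :
    ∫ s in Ioc r t, (A * exp ((E t - E s) • A)) v ∂E.measure = exp ((E t - E r) • A) v - v := by
  rw [← ContinuousLinearMap.integral_apply (integrableOn_Ioc_mul_exp_smul hE A),
    setIntegral_mul_exp_smul_sub hE A hrt, sub_apply, one_apply_eq_self]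

lemma setIntegral_mul_exp_smul_apply_setIntegral (hE : Continuous E) (A : V →L[ℝ] V)
    {G : ℝ → V} {a t : ℝ} (hG : IntegrableOn G (Ioc a t) E.measure) :
    ∫ s in Ioc a t, (A * exp ((E t - E s) • A)) (∫ r in Ioc a s, G r ∂E.measure) ∂E.measure =
      ∫ r in Ioc a t, (exp ((E t - E r) • A) - 1) (G r) ∂E.measure := by
  refine ((ContinuousLinearMap.id ℝ _).setIntegral_Ioc_bilin_setIntegral_Ioc
    (integrableOn_Ioc_mul_exp_smul hE A) hG).trans
    (setIntegral_congr_fun measurableSet_Ioc fun r hr => ?_)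
  rw [ContinuousLinearMap.id_apply, integral_Icc_eq_integral_Ioc'
    (measure_singleton_of_continuous hE r), setIntegral_mul_exp_smul_sub hE A hr.2]

theorem variation_of_constants (hE : Continuous E) (hE0 : E 0 = 0) (A : V →L[ℝ] V) (x₀ : V)
    {F : ℝ → V} (hF : ∀ t, IntegrableOn F (Ioc 0 t) E.measure)
    {X : ℝ → V} (hXc : ContinuousOn X (Ici 0))
    (hX : ∀ t, 0 ≤ t → X t = x₀ + ∫ s in Ioc 0 t, (A (X s) + F s) ∂E.measure)
    {t : ℝ} (ht : 0 ≤ t) :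
    X t = exp (E t • A) x₀ + ∫ s in Ioc 0 t, exp ((E t - E s) • A) (F s) ∂E.measure := by
  set P : ℝ → V →L[ℝ] V := fun s => exp ((E t - E s) • A)
  have hP : Continuous P := (continuous_exp_smul_const A).comp (continuous_const.sub hE)
  have hintegrable {f : ℝ → V} (hf : ContinuousOn f (Icc 0 t)) :
      IntegrableOn f (Ioc 0 t) E.measure :=
    hf.integrableOn_Icc.mono_set Ioc_subset_Icc_self
  have hXt : ContinuousOn X (Icc 0 t) := hXc.mono Icc_subset_Ici_self
  have hAPX : IntegrableOn (fun s => (A * P s) (X s)) (Ioc 0 t) E.measure :=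
    hintegrable ((continuous_const.mul hP).continuousOn.clm_apply hXt)
  have hPF : IntegrableOn (fun s => P s (F s)) (Ioc 0 t) E.measure :=
    (ContinuousLinearMap.id ℝ (V →L[ℝ] V)).integrableOn_Ioc_bilin hP.continuousOn (hF t)
  have hG : IntegrableOn (fun s => A (X s) + F s) (Ioc 0 t) E.measure :=
    (hintegrable (A.continuous.comp_continuousOn hXt)).add (hF t)
  have hlhs : ∫ s in Ioc 0 t, (A * P s) (∫ r in Ioc 0 s, (A (X r) + F r) ∂E.measure) ∂E.measure
      = ∫ s in Ioc 0 t, (A * P s) (X s) ∂E.measure - (exp (E t • A) x₀ - x₀) := by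
    have hAPx₀ : IntegrableOn (fun s => (A * P s) x₀) (Ioc 0 t) E.measure :=
      hintegrable ((continuous_const.mul hP).continuousOn.clm_apply continuousOn_const)
    have hx₀ : ∫ s in Ioc 0 t, (A * P s) x₀ ∂E.measure = exp (E t • A) x₀ - x₀ := by
      have h := setIntegral_mul_exp_smul_apply hE A x₀ ht
      rwa [hE0, sub_zero] at h
    rw [← hx₀, ← integral_sub hAPX hAPx₀]
    refine setIntegral_congr_fun measurableSet_Ioc fun s hs => ?_
    rw [← map_sub, hX s hs.1.le, add_sub_cancel_left]
  have hrhs : ∫ r in Ioc 0 t, (P r - 1) (A (X r) + F r) ∂E.measure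
      = ∫ r in Ioc 0 t, (A * P r) (X r) ∂E.measure + ∫ r in Ioc 0 t, P r (F r) ∂E.measure
        - (X t - x₀) := by
    have hAPXPF : IntegrableOn (fun r => (A * P r) (X r) + P r (F r)) (Ioc 0 t) E.measure :=
      hAPX.add hPF
    rw [hX t ht, add_sub_cancel_left, ← integral_add hAPX hPF, ← integral_sub hAPXPF hG]
    refine setIntegral_congr_fun measurableSet_Ioc fun r _ => ?_
    have hcomm : A * P r = P r * A := ((Commute.refl A).smul_right _).exp_right
    rw [hcomm, sub_apply, one_apply_eq_self, mul_apply_eq_comp, map_add]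
  have key : ∫ s in Ioc 0 t, (A * P s) (∫ r in Ioc 0 s, (A (X r) + F r) ∂E.measure) ∂E.measure
      = ∫ r in Ioc 0 t, (P r - 1) (A (X r) + F r) ∂E.measure :=
    setIntegral_mul_exp_smul_apply_setIntegral hE A hG
  rw [hlhs, hrhs] at key
  linear_combination (norm := module) key

end Exponential

end StieltjesFunction

namespace Matrix

variable (n 𝕜 : Type*) [Fintype n] [DecidableEq n]

noncomputable def toContinuousLinearMapAlgHom [NontriviallyNormedField 𝕜] [CompleteSpace 𝕜] :
    Matrix n n 𝕜 →ₐ[𝕜] (n → 𝕜) →L[𝕜] (n → 𝕜) where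
  toFun M := LinearMap.toContinuousLinearMap M.mulVecLin
  map_one' := by ext; simp
  map_mul' M N := by ext; simp [mulVec_mulVec]
  map_zero' := by ext; simp
  map_add' M N := by ext; simp
  commutes' r := by ext; simp [Algebra.algebraMap_eq_smul_one]

variable {n 𝕜}

@[simp] lemma toContinuousLinearMapAlgHom_apply [NontriviallyNormedField 𝕜] [CompleteSpace 𝕜]
    (M : Matrix n n 𝕜) (v : n → 𝕜) : toContinuousLinearMapAlgHom n 𝕜 M v = M *ᵥ v := rfl

lemma toContinuousLinearMapAlgHom_exp [RCLike 𝕜] (M : Matrix n n 𝕜) :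
    toContinuousLinearMapAlgHom n 𝕜 (exp M) = exp (toContinuousLinearMapAlgHom n 𝕜 M) := by
  -- `Matrix` has no global norm; any norm compatible with its topology will do here.
  let : NormedRing (Matrix n n 𝕜) := Matrix.linftyOpNormedRing
  let : NormedAlgebra 𝕜 (Matrix n n 𝕜) := Matrix.linftyOpNormedAlgebra
  have : @CompleteSpace (Matrix n n 𝕜) PseudoMetricSpace.toUniformSpace :=
    FiniteDimensional.complete 𝕜 _
  exact map_exp_of_mem_ball (𝕂 := 𝕜) (toContinuousLinearMapAlgHom n 𝕜)
    (LinearMap.continuous_of_finiteDimensional (toContinuousLinearMapAlgHom n 𝕜).toLinearMap) M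
    ((expSeries_radius_eq_top 𝕜 (Matrix n n 𝕜)).symm ▸ edist_lt_top _ _)

end Matrix

theorem timeChanged_variation_of_constants_general
    (n : ℕ) (E : StieltjesFunction ℝ) (hEcont : Continuous E) (hE0 : E 0 = 0)
    (A : Matrix (Fin n) (Fin n) ℝ) (x₀ : Fin n → ℝ)
    (F : ℝ → Fin n → ℝ)
    (hFint : ∀ t : ℝ, IntegrableOn F (Set.Ioc 0 t) E.measure)
    (X : ℝ → Fin n → ℝ) (hXcont : ContinuousOn X (Set.Ici 0))
    (hX : ∀ t : ℝ, 0 ≤ t →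
      X t = x₀ + ∫ s in Set.Ioc 0 t, (A.mulVec (X s) + F s) ∂E.measure) :
    ∀ t : ℝ, 0 ≤ t →
      X t = (NormedSpace.exp (E t • A)).mulVec x₀ +
        ∫ s in Set.Ioc 0 t, (NormedSpace.exp ((E t - E s) • A)).mulVec (F s)
          ∂E.measure := by
  intro t ht
  set φ := Matrix.toContinuousLinearMapAlgHom (Fin n) ℝ
  have hφ : ∀ M v, φ M v = M.mulVec v := Matrix.toContinuousLinearMapAlgHom_apply
  have hφexp (c : ℝ) : φ (NormedSpace.exp (c • A)) = NormedSpace.exp (c • φ A) := by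
    rw [Matrix.toContinuousLinearMapAlgHom_exp, map_smul]
  have hXφ : ∀ t : ℝ, 0 ≤ t → X t = x₀ + ∫ s in Set.Ioc 0 t, (φ A (X s) + F s) ∂E.measure := hX
  simpa only [← hφexp, hφ] using E.variation_of_constants hEcont hE0 (φ A) x₀ hFint hXcont hXφ ht

/-- **Variation-of-constants formula for a time-changed linear system.**
Let `E` be a nondecreasing continuous function with `E 0 = 0` (a `StieltjesFunction`
with Lebesgue–Stieltjes measure `E.measure`), `A` an `n × n` real matrix, and
`F` a Borel function integrable with respect to `dE` on `(0, t]` for every `t`.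
If `X` is continuous on `[0,∞)` and satisfies
`X t = x₀ + ∫_{(0,t]} (A ⬝ X s + F s) dE s` for all `t ≥ 0`, then
`X t = exp (E t • A) ⬝ x₀ + ∫_{(0,t]} exp ((E t - E s) • A) ⬝ F s dE s` for all `t ≥ 0`. -/
theorem timeChanged_variation_of_constants
    (n : ℕ) (E : StieltjesFunction ℝ) (hEcont : Continuous E) (hE0 : E 0 = 0)
    (A : Matrix (Fin n) (Fin n) ℝ) (x₀ : Fin n → ℝ)
    (F : ℝ → Fin n → ℝ) (hFmeas : Measurable F)
    (hFint : ∀ t : ℝ, IntegrableOn F (Set.Ioc 0 t) E.measure)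
    (X : ℝ → Fin n → ℝ) (hXcont : ContinuousOn X (Set.Ici 0))
    (hX : ∀ t : ℝ, 0 ≤ t →
      X t = x₀ + ∫ s in Set.Ioc 0 t, (A.mulVec (X s) + F s) ∂E.measure) :
    ∀ t : ℝ, 0 ≤ t →
      X t = (NormedSpace.exp (E t • A)).mulVec x₀ +
        ∫ s in Set.Ioc 0 t, (NormedSpace.exp ((E t - E s) • A)).mulVec (F s)
          ∂E.measure :=
  timeChanged_variation_of_constants_general n E hEcont hE0 A x₀ F hFint X hXcont hX
end

section
/- Let E : [0,∞) → [0,∞) be nondecreasing and continuous with E(0) = 0, with Lebesgue–Stieltjes measure dE (dE((a,b]) = E(b) − E(a)). Let x₀ ∈ ℝⁿ, let P : [0,∞) → ℝⁿ be Borel and locally Lebesgue-integrable, let Φ : [0,∞) → ℝⁿ be Borel and locally dE-integrable, and define X(t) := x₀ + ∫₀^t P(s) ds + ∫_{(0,t]} Φ(s) dE(s). Let F : ℝ × ℝ × ℝⁿ → ℝ be continuously differentiable. Then for every t ≥ 0, F(t, E(t), X(t)) − F(0, 0, x₀) = ∫₀^t [∂_{t₁}F(s, E(s), X(s)) + ∇_x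 F(s, E(s), X(s))·P(s)] ds + ∫_{(0,t]} [∂_{t₂}F(s, E(s), X(s)) + ∇_x F(s, E(s), X(s))·Φ(s)] dE(s). -/
/-!
Under the time change `τ u = u + E u` the measure `du + dE(u)` is carried to Lebesgue measure, so
`du` and `dE` acquire densities `ρ₁, ρ₂` with respect to the new time `s`. In that time the path
`u ↦ (u, E u, X u)` becomes the Lebesgue primitive `s ↦ (0, 0, x₀) + ∫₀^s g` of the integrable
function `g = ρ₁ • (1, 0, P ∘ τ⁻¹) + ρ₂ • (0, 1, Φ ∘ τ⁻¹)`. Composed with this absolutely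
continuous path, the locally Lipschitz `F` stays absolutely continuous, so the fundamental theorem
of calculus for absolutely continuous functions applies; changing variables back splits the result
into the `ds` and `dE` integrals.
-/

open MeasureTheory Set Filter

theorem AbsolutelyContinuousOnInterval.of_dist_le {X : Type*} [PseudoMetricSpace X]
    {f : ℝ → X} {φ : ℝ → ℝ} {a b : ℝ} (hφ : AbsolutelyContinuousOnInterval φ a b)
    (h : ∀ x ∈ uIcc a b, ∀ y ∈ uIcc a b, dist (f x) (f y) ≤ dist (φ x) (φ y)) :
    AbsolutelyContinuousOnInterval f a b := by
  refine squeeze_zero' (Eventually.of_forall fun _ ↦ Finset.sum_nonneg fun _ _ ↦ dist_nonneg)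
    ?_ hφ
  filter_upwards [eventually_inf_principal.mpr (Eventually.of_forall fun _ hE ↦ hE)]
    with E hE
  exact Finset.sum_le_sum fun i hi ↦ h _ (hE.1 i hi).1 _ (hE.1 i hi).2

section

variable {V : Type*} [NormedAddCommGroup V] [NormedSpace ℝ V]

theorem intervalIntegral.dist_integral_le_dist_integral_norm {μ : Measure ℝ} {g : ℝ → V}
    {a b x y : ℝ} (hg : IntervalIntegrable g μ a b) (hx : x ∈ uIcc a b) (hy : y ∈ uIcc a b) :
    dist (∫ u in a..x, g u ∂μ) (∫ u in a..y, g u ∂μ) ≤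
      dist (∫ u in a..x, ‖g u‖ ∂μ) (∫ u in a..y, ‖g u‖ ∂μ) := by
  have hgx : IntervalIntegrable g μ a x := hg.mono_set (uIcc_subset_uIcc_left hx)
  have hgy : IntervalIntegrable g μ a y := hg.mono_set (uIcc_subset_uIcc_left hy)
  rw [dist_eq_norm, Real.dist_eq, integral_interval_sub_left hgx hgy,
    integral_interval_sub_left hgx.norm hgy.norm]
  exact norm_integral_le_abs_integral_norm

variable [FiniteDimensional ℝ V]

theorem integral_fderiv_apply_primitive_eq_sub {F : V → ℝ} (hF : ContDiff ℝ 1 F)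
    {g : ℝ → V} {a b : ℝ} (hg : IntervalIntegrable g volume a b) (c : V) :
    ∫ s in a..b, fderiv ℝ F (c + ∫ u in a..s, g u) (g s) = F (c + ∫ u in a..b, g u) - F c := by
  set h : ℝ → V := fun x ↦ c + ∫ u in a..x, g u
  have hh : ContinuousOn h (uIcc a b) :=
    continuousOn_const.add
      (intervalIntegral.continuousOn_primitive_interval ((intervalIntegrable_iff').1 hg))
  obtain ⟨R, hR⟩ := (isCompact_uIcc.image_of_continuousOn hh).isBounded.subset_closedBall 0
  obtain ⟨K, hK⟩ := hF.contDiffOn.exists_lipschitzOnWith one_ne_zero (convex_closedBall 0 R)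
    (isCompact_closedBall 0 R)
  have hAC : AbsolutelyContinuousOnInterval (F ∘ h) a b := by
    refine AbsolutelyContinuousOnInterval.of_dist_le
      ((hg.norm.absolutelyContinuousOnInterval_intervalIntegral left_mem_uIcc).const_mul K)
      fun x hx y hy ↦ ?_
    calc dist (F (h x)) (F (h y)) ≤ K * dist (h x) (h y) :=
          hK.dist_le_mul _ (hR ⟨x, hx, rfl⟩) _ (hR ⟨y, hy, rfl⟩)
      _ ≤ K * dist (∫ u in a..x, ‖g u‖) (∫ u in a..y, ‖g u‖) := by
          rw [dist_add_left]
          exact mul_le_mul_of_nonneg_left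
            (intervalIntegral.dist_integral_le_dist_integral_norm hg hx hy) K.2
      _ = _ := by rw [Real.dist_eq, Real.dist_eq, ← mul_sub, abs_mul, NNReal.abs_eq]
  have hderiv : ∀ᵐ s, s ∈ uIoc a b → deriv (F ∘ h) s = fderiv ℝ F (h s) (g s) := by
    filter_upwards [hg.ae_hasDerivAt_integral] with s hs hsab
    exact ((hF.differentiable one_ne_zero (h s)).hasFDerivAt.comp_hasDerivAt s
      ((hs (uIoc_subset_uIcc hsab) a left_mem_uIcc).const_add c)).deriv
  rw [← intervalIntegral.integral_congr_ae hderiv, hAC.integral_deriv_eq_sub]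
  simp [h]

end

theorem IntegrableOn.continuousOn_clm_apply {X V W : Type*} [TopologicalSpace X] [T2Space X]
    [MeasurableSpace X] [OpensMeasurableSpace X] {μ : Measure X}
    [NormedAddCommGroup V] [NormedSpace ℝ V] [NormedAddCommGroup W] [NormedSpace ℝ W]
    {K : Set X} {L : X → V →L[ℝ] W} {g : X → V} (hg : IntegrableOn g K μ)
    (hL : ContinuousOn L K) (hK : IsCompact K) :
    IntegrableOn (fun x ↦ L x (g x)) K μ := by
  obtain ⟨C, hC⟩ := hK.exists_bound_of_continuousOn hL
  refine (hg.norm.const_mul C).mono' ?_ ?_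
  · exact isBoundedBilinearMap_apply.continuous.comp_aestronglyMeasurable
      ((hL.aestronglyMeasurable_of_isCompact hK hK.measurableSet).prodMk hg.aestronglyMeasurable)
  · filter_upwards [ae_restrict_mem hK.measurableSet] with x hx
    exact (L x).le_of_opNorm_le (hC x hx) _

theorem setIntegral_const_const_prodMk {α U U' W : Type*} [MeasurableSpace α] {μ : Measure α}
    {S : Set α} [NormedAddCommGroup U] [NormedSpace ℝ U] [CompleteSpace U]
    [NormedAddCommGroup U'] [NormedSpace ℝ U'] [CompleteSpace U']
    [NormedAddCommGroup W] [NormedSpace ℝ W] [CompleteSpace W]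
    (hS : μ S ≠ ⊤) (c : U) (c' : U') {f : α → W} (hf : IntegrableOn f S μ) :
    ∫ x in S, (c, c', f x) ∂μ = (μ.real S • c, μ.real S • c', ∫ x in S, f x ∂μ) := by
  rw [integral_pair (integrableOn_const (C := c) hS)
      (Integrable.prodMk (integrableOn_const (C := c') hS) hf),
    integral_pair (integrableOn_const (C := c') hS) hf, setIntegral_const, setIntegral_const]

section

variable {W : Type*} [NormedAddCommGroup W] [NormedSpace ℝ W] (τ : ℝ ≃o ℝ) {μ : Measure ℝ}

theorem OrderIso.setIntegral_Ioc_rnDeriv_map_smul [IsFiniteMeasure μ] (hμ : μ.map τ ≪ volume)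
    (f : ℝ → W) (a b : ℝ) :
    ∫ s in Ioc (τ a) (τ b), ((μ.map τ).rnDeriv volume s).toReal • f (τ.symm s) =
      ∫ u in Ioc a b, f u ∂μ := by
  have hτ : MeasurableEmbedding τ := τ.toHomeomorph.measurableEmbedding
  rw [setIntegral_rnDeriv_smul hμ measurableSet_Ioc, hτ.setIntegral_map, τ.preimage_Ioc]
  simp

theorem OrderIso.integrable_rnDeriv_map_smul_iff [IsFiniteMeasure μ] (hμ : μ.map τ ≪ volume)
    {f : ℝ → W} :
    Integrable (fun s ↦ ((μ.map τ).rnDeriv volume s).toReal • f (τ.symm s)) ↔ Integrable f μ := by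
  have hτ : MeasurableEmbedding τ := τ.toHomeomorph.measurableEmbedding
  rw [integrable_rnDeriv_smul_iff hμ, hτ.integrable_map_iff]
  simp [Function.comp_def]

end

namespace StieltjesFunction

variable (E : StieltjesFunction ℝ)

instance isFiniteMeasure_restrict_Ioc (a b : ℝ) :
    IsFiniteMeasure (E.measure.restrict (Ioc a b)) :=
  isFiniteMeasure_restrict.2 measure_Ioc_lt_top.ne

theorem strictMono_id_add : StrictMono fun u ↦ u + E u :=
  strictMono_id.add_monotone E.mono

theorem surjective_id_add (hE : Continuous E) : Function.Surjective fun u ↦ u + E u := by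
  refine (continuous_id.add hE).surjective ?_ ?_
  · exact tendsto_atTop_add_right_of_le' _ (E 0) tendsto_id
      ((eventually_ge_atTop 0).mono fun _ h ↦ E.mono h)
  · exact tendsto_atBot_add_right_of_ge' _ (E 0) tendsto_id
      ((eventually_le_atBot 0).mono fun _ h ↦ E.mono h)

noncomputable def timeChange (hE : Continuous E) : ℝ ≃o ℝ :=
  StrictMono.orderIsoOfSurjective _ E.strictMono_id_add (E.surjective_id_add hE)

@[simp]
theorem timeChange_apply (hE : Continuous E) (u : ℝ) : E.timeChange hE u = u + E u := rfl

theorem map_timeChange_add_measure (hE : Continuous E) :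
    (volume + E.measure).map (E.timeChange hE) = volume := by
  refine (Measure.ext_of_Ioc volume _ fun a b hab ↦ ?_).symm
  set τ := E.timeChange hE
  rw [Measure.map_apply τ.monotone.measurable measurableSet_Ioc, τ.preimage_Ioc,
    Measure.add_apply, Real.volume_Ioc, E.measure_Ioc, Real.volume_Ioc,
    ← ENNReal.ofReal_add (by linarith [τ.symm.monotone hab.le])
      (by linarith [E.mono (τ.symm.monotone hab.le)])]
  congr 1
  have h := congrArg₂ (· - ·) (τ.apply_symm_apply b) (τ.apply_symm_apply a)
  simp only [τ, timeChange_apply] at h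
  linarith

theorem absolutelyContinuous_map_timeChange (hE : Continuous E) {μ : Measure ℝ}
    (hμ : μ ≤ volume + E.measure) :
    μ.map (E.timeChange hE) ≪ volume :=
  (map_timeChange_add_measure E hE ▸
    Measure.map_mono hμ (E.timeChange hE).monotone.measurable).absolutelyContinuous

variable {V : Type*} [NormedAddCommGroup V] [NormedSpace ℝ V] [FiniteDimensional ℝ V]

theorem integral_fderiv_add_integral_fderiv_eq_sub (hE : Continuous E) {F : V → ℝ}
    (hF : ContDiff ℝ 1 F) {w₁ w₂ : ℝ → V} {a t : ℝ} (hat : a ≤ t) (hw₁ : IntegrableOn w₁ (Ioc a t))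
    (hw₂ : IntegrableOn w₂ (Ioc a t) E.measure) {Z : ℝ → V}
    (hZ : ∀ u ∈ Icc a t,
      Z u = Z a + (∫ s in Ioc a u, w₁ s) + ∫ s in Ioc a u, w₂ s ∂E.measure) :
    F (Z t) - F (Z a) =
      (∫ u in Ioc a t, fderiv ℝ F (Z u) (w₁ u)) +
        ∫ u in Ioc a t, fderiv ℝ F (Z u) (w₂ u) ∂E.measure := by
  set τ := E.timeChange hE
  set μ₁ := volume.restrict (Ioc a t)
  set μ₂ := E.measure.restrict (Ioc a t)
  have hμ₁ : μ₁.map τ ≪ volume := E.absolutelyContinuous_map_timeChange hE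
    (Measure.restrict_le_self.trans (Measure.le_add_right le_rfl))
  have hμ₂ : μ₂.map τ ≪ volume := E.absolutelyContinuous_map_timeChange hE
    (Measure.restrict_le_self.trans (Measure.le_add_left le_rfl))
  set g₁ := fun s ↦ ((μ₁.map τ).rnDeriv volume s).toReal • w₁ (τ.symm s)
  set g₂ := fun s ↦ ((μ₂.map τ).rnDeriv volume s).toReal • w₂ (τ.symm s)
  have hg₁ : Integrable g₁ := (τ.integrable_rnDeriv_map_smul_iff hμ₁).2 hw₁
  have hg₂ : Integrable g₂ := (τ.integrable_rnDeriv_map_smul_iff hμ₂).2 hw₂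
  set Y : ℝ → V := fun s ↦ Z a + ∫ r in τ a..s, (g₁ + g₂) r
  have hZY : ∀ u ∈ Icc a t, Z u = Y (τ u) := by
    intro u hu
    simp only [Y]
    rw [hZ u hu, add_assoc, intervalIntegral.integral_of_le (τ.monotone hu.1), Pi.add_def,
      integral_add hg₁.integrableOn hg₂.integrableOn, τ.setIntegral_Ioc_rnDeriv_map_smul hμ₁,
      τ.setIntegral_Ioc_rnDeriv_map_smul hμ₂, Measure.restrict_restrict measurableSet_Ioc,
      Measure.restrict_restrict measurableSet_Ioc, Ioc_inter_Ioc, sup_idem, min_eq_left hu.2]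
  have hYτ : ∀ s ∈ Icc (τ a) (τ t), Y s = Z (τ.symm s) := fun s hs ↦ by
    rw [hZY _ ⟨τ.symm_apply_apply a ▸ τ.symm.monotone hs.1, τ.symm_apply_apply t ▸
      τ.symm.monotone hs.2⟩, τ.apply_symm_apply]
  have hint : ∀ g : ℝ → V, Integrable g →
      IntegrableOn (fun s ↦ fderiv ℝ F (Y s) (g s)) (Ioc (τ a) (τ t)) := fun g hg ↦
    (IntegrableOn.continuousOn_clm_apply hg.integrableOn
      ((hF.continuous_fderiv one_ne_zero).comp
        (continuous_const.add ((hg₁.add hg₂).continuous_primitive _))).continuousOn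
      isCompact_Icc).mono_set Ioc_subset_Icc_self
  have h₁ := τ.setIntegral_Ioc_rnDeriv_map_smul hμ₁ (fun u ↦ fderiv ℝ F (Z u) (w₁ u)) a t
  have h₂ := τ.setIntegral_Ioc_rnDeriv_map_smul hμ₂ (fun u ↦ fderiv ℝ F (Z u) (w₂ u)) a t
  rw [Measure.restrict_restrict measurableSet_Ioc, inter_self] at h₁ h₂
  rw [hZY t ⟨hat, le_rfl⟩, ← integral_fderiv_apply_primitive_eq_sub hF
    (hg₁.add hg₂).intervalIntegrable, intervalIntegral.integral_of_le (τ.monotone hat)]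
  calc ∫ s in Ioc (τ a) (τ t), fderiv ℝ F (Y s) ((g₁ + g₂) s)
      = (∫ s in Ioc (τ a) (τ t), fderiv ℝ F (Y s) (g₁ s)) +
          ∫ s in Ioc (τ a) (τ t), fderiv ℝ F (Y s) (g₂ s) := by
        simp only [Pi.add_apply, map_add]
        exact integral_add (hint g₁ hg₁) (hint g₂ hg₂)
    _ = _ := by
        rw [← h₁, ← h₂]
        congr 1 <;> refine setIntegral_congr_fun measurableSet_Ioc fun s hs ↦ ?_ <;>
          simp only [g₁, g₂, map_smul, hYτ s (Ioc_subset_Icc_self hs)]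

end StieltjesFunction

theorem timeChanged_ito_formula_general
    (n : ℕ) (E : StieltjesFunction ℝ) (hEcont : Continuous E) (hE0 : E 0 = 0)
    (x₀ : Fin n → ℝ) (P Φ : ℝ → Fin n → ℝ)
    (hPint : ∀ t : ℝ, 0 ≤ t → IntegrableOn P (Set.Ioc 0 t) volume)
    (hΦint : ∀ t : ℝ, 0 ≤ t → IntegrableOn Φ (Set.Ioc 0 t) E.measure)
    (X : ℝ → Fin n → ℝ)
    (hX : ∀ t : ℝ, 0 ≤ t →
      X t = x₀ + (∫ s in Set.Ioc 0 t, P s) + ∫ s in Set.Ioc 0 t, Φ s ∂E.measure)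
    (F : ℝ × ℝ × (Fin n → ℝ) → ℝ) (hF : ContDiff ℝ 1 F) :
    ∀ t : ℝ, 0 ≤ t →
      F (t, E t, X t) - F (0, 0, x₀) =
        (∫ s in Set.Ioc 0 t,
          (fderiv ℝ F (s, E s, X s) (1, 0, 0) +
            fderiv ℝ F (s, E s, X s) (0, 0, P s))) +
        ∫ s in Set.Ioc 0 t,
          (fderiv ℝ F (s, E s, X s) (0, 1, 0) +
            fderiv ℝ F (s, E s, X s) (0, 0, Φ s)) ∂E.measure := by
  intro t ht
  have hZ : ∀ u ∈ Icc 0 t, (u, E u, X u) = ((0 : ℝ), E 0, X 0) +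
      (∫ s in Ioc 0 u, ((1 : ℝ), (0 : ℝ), P s)) +
      ∫ s in Ioc 0 u, ((0 : ℝ), (1 : ℝ), Φ s) ∂E.measure := by
    intro u hu
    rw [setIntegral_const_const_prodMk measure_Ioc_lt_top.ne _ _ (hPint u hu.1),
      setIntegral_const_const_prodMk measure_Ioc_lt_top.ne _ _ (hΦint u hu.1), hX u hu.1]
    have hEu : 0 ≤ E u := hE0 ▸ E.mono hu.1
    simp [measureReal_def, E.measure_Ioc, hE0, hu.1, hEu, hX 0 le_rfl]
  have key := E.integral_fderiv_add_integral_fderiv_eq_sub hEcont hF ht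
    (Integrable.prodMk (integrableOn_const measure_Ioc_lt_top.ne)
      (Integrable.prodMk (integrableOn_const measure_Ioc_lt_top.ne) (hPint t ht)))
    (Integrable.prodMk (integrableOn_const measure_Ioc_lt_top.ne)
      (Integrable.prodMk (integrableOn_const measure_Ioc_lt_top.ne) (hΦint t ht))) hZ
  rw [hE0, hX 0 le_rfl] at key
  simpa only [← map_add, Prod.mk_add_mk, add_zero, zero_add, Ioc_self,
    Measure.restrict_empty, integral_zero_measure] using key

/-- **Generalized time-changed Itô formula (driftless-noise case `Ψ = 0`).**
Let `E` be a nondecreasing continuous function with `E 0 = 0` (a `StieltjesFunction`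
with Lebesgue–Stieltjes measure `E.measure`), let `P` be locally Lebesgue-integrable,
`Φ` locally `dE`-integrable, and `X t = x₀ + ∫₀^t P s ds + ∫_{(0,t]} Φ s dE s`.
If `F : ℝ × ℝ × ℝⁿ → ℝ` is `C¹`, then for every `t ≥ 0`,
`F (t, E t, X t) - F (0, 0, x₀)
  = ∫₀^t (∂_{t₁} F + ∇ₓF ⋅ P) (s, E s, X s) ds
  + ∫_{(0,t]} (∂_{t₂} F + ∇ₓF ⋅ Φ) (s, E s, X s) dE s`,
where the partial derivatives are expressed via the Fréchet derivative of `F`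
applied to the directions `(1,0,0)`, `(0,1,0)` and `(0,0,v)`. -/
theorem timeChanged_ito_formula
    (n : ℕ) (E : StieltjesFunction ℝ) (hEcont : Continuous E) (hE0 : E 0 = 0)
    (x₀ : Fin n → ℝ) (P Φ : ℝ → Fin n → ℝ)
    (hPmeas : Measurable P)
    (hPint : ∀ t : ℝ, 0 ≤ t → IntegrableOn P (Set.Ioc 0 t) volume)
    (hΦmeas : Measurable Φ)
    (hΦint : ∀ t : ℝ, 0 ≤ t → IntegrableOn Φ (Set.Ioc 0 t) E.measure)
    (X : ℝ → Fin n → ℝ)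
    (hX : ∀ t : ℝ, 0 ≤ t →
      X t = x₀ + (∫ s in Set.Ioc 0 t, P s) + ∫ s in Set.Ioc 0 t, Φ s ∂E.measure)
    (F : ℝ × ℝ × (Fin n → ℝ) → ℝ) (hF : ContDiff ℝ 1 F) :
    ∀ t : ℝ, 0 ≤ t →
      F (t, E t, X t) - F (0, 0, x₀) =
        (∫ s in Set.Ioc 0 t,
          (fderiv ℝ F (s, E s, X s) (1, 0, 0) +
            fderiv ℝ F (s, E s, X s) (0, 0, P s))) +
        ∫ s in Set.Ioc 0 t,
          (fderiv ℝ F (s, E s, X s) (0, 1, 0) +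
            fderiv ℝ F (s, E s, X s) (0, 0, Φ s)) ∂E.measure :=
  timeChanged_ito_formula_general n E hEcont hE0 x₀ P Φ hPint hΦint X hX F hF
end
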